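/- arXiv:1804.09697 — 2 statements merged into one kernel-verified Lean document; each statement's English description precedes it below -/
import Mathlib

section
/- Let p, q be real polynomials with deg p ≤ 2 and deg q ≤ 1, let n ≥ 1 and let x_1, …, x_n be pairwise distinct real numbers satisfying p(x_i)·∑_{k≠i} 2/(x_i − x_k) = q(x_i) − p'(x_i) for all 1 ≤ i ≤ n. Then there exists λ ∈ ℝ such that the polynomial y(x) = ∏_{k=1}^n (x − x_k) satisfies −(p(x)·y'(x))' + q(x)·y'(x) = λ·y(x) identically. -/
open Polynomial Finset

private lemma deriv_fin_prod {ι : Type*} [DecidableEq ι] (s : Finset ι) (f : ι → Polynomial ℝ) :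
    derivative (∏ i ∈ s, f i) = ∑ i ∈ s, (∏ k ∈ s.erase i, f k) * derivative (f i) := by
  induction s using Finset.induction_on with
  | empty => simp
  | @insert a s ha ih =>
    rw [Finset.prod_insert ha, derivative_mul, ih, Finset.sum_insert ha,
      Finset.erase_insert ha, Finset.mul_sum, mul_comm (derivative (f a))]
    congr 1
    refine Finset.sum_congr rfl fun i hi => ?_
    rw [Finset.erase_insert_of_ne (fun h : a = i => ha (h ▸ hi : a ∈ s)),
      Finset.prod_insert (fun h => ha (Finset.mem_of_mem_erase h))]
    ring


theorem stmt_2 (p q : Polynomial ℝ) (hp : p.natDegree ≤ 2) (hq : q.natDegree ≤ 1)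
    (n : ℕ) (hn : 1 ≤ n) (x : Fin n → ℝ) (hx : Function.Injective x)
    (heq : ∀ i : Fin n, p.eval (x i) * ∑ k ∈ univ.erase i, 2 / (x i - x k)
        = q.eval (x i) - p.derivative.eval (x i)) :
    ∃ lam : ℝ,
      -(p * (∏ k, (X - C (x k))).derivative).derivative
        + q * (∏ k, (X - C (x k))).derivative
        = C lam * ∏ k, (X - C (x k)) := by
  classical
  set y : Polynomial ℝ := ∏ k, (X - C (x k)) with hy
  set F : Polynomial ℝ := -(p * y.derivative).derivative + q * y.derivative with hF
  have hymonic : y.Monic := monic_prod_of_monic _ _ (fun i _ => monic_X_sub_C (x i))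
  have hydeg : y.natDegree = n := by
    rw [hy, natDegree_prod _ _ (fun i _ => X_sub_C_ne_zero (x i))]
    simp
  -- eval of y' at x i
  have hP : ∀ i : Fin n, y.derivative.eval (x i) = ∏ k ∈ univ.erase i, (x i - x k) := by
    intro i
    rw [hy, deriv_fin_prod, eval_finset_sum]
    rw [Finset.sum_eq_single i]
    · simp [eval_prod]
    · intro j _ hji
      rw [eval_mul, eval_prod]
      rw [Finset.prod_eq_zero (Finset.mem_erase.2 ⟨(Ne.symm hji), mem_univ i⟩)]
      · ring
      · simp
    · simp
  have hPne : ∀ i : Fin n, (∏ k ∈ univ.erase i, (x i - x k)) ≠ 0 := by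
    intro i
    refine Finset.prod_ne_zero_iff.2 fun k hk => sub_ne_zero_of_ne ?_
    exact fun h => (Finset.mem_erase.1 hk).1 (hx h).symm
  -- second derivative at x i
  have hQ : ∀ i : Fin n,
      y.derivative.derivative.eval (x i)
        = 2 * ∑ j ∈ univ.erase i, ∏ k ∈ (univ.erase i).erase j, (x i - x k) := by
    intro i
    have hfac : y = (X - C (x i)) * ∏ k ∈ univ.erase i, (X - C (x k)) :=
      (Finset.mul_prod_erase univ _ (mem_univ i)).symm
    set z : Polynomial ℝ := ∏ k ∈ univ.erase i, (X - C (x k)) with hz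
    have h1 : y.derivative = z + (X - C (x i)) * z.derivative := by
      rw [hfac, derivative_mul]; simp
    have h2 : y.derivative.derivative
        = z.derivative + (z.derivative + (X - C (x i)) * z.derivative.derivative) := by
      rw [h1, derivative_add, derivative_mul]; simp
    have h3 : z.derivative.eval (x i)
        = ∑ j ∈ univ.erase i, ∏ k ∈ (univ.erase i).erase j, (x i - x k) := by
      rw [hz, deriv_fin_prod, eval_finset_sum]
      refine Finset.sum_congr rfl fun j hj => ?_
      simp [eval_prod]
    rw [h2]
    simp [h3]
    ring
  -- roots of F
  have hroot : ∀ i : Fin n, F.eval (x i) = 0 := by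
    intro i
    have hS : p.eval (x i) * (2 * ∑ j ∈ univ.erase i, ∏ k ∈ (univ.erase i).erase j, (x i - x k))
        = (q.eval (x i) - p.derivative.eval (x i)) * ∏ k ∈ univ.erase i, (x i - x k) := by
      have := heq i
      calc p.eval (x i) * (2 * ∑ j ∈ univ.erase i, ∏ k ∈ (univ.erase i).erase j, (x i - x k))
          = p.eval (x i) * ((∑ j ∈ univ.erase i, 2 / (x i - x j)) *
              ∏ k ∈ univ.erase i, (x i - x k)) := by
            congr 1
            rw [Finset.sum_mul]
            rw [Finset.mul_sum]
            refine Finset.sum_congr rfl fun j hj => ?_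
            have hjne : x i - x j ≠ 0 := sub_ne_zero_of_ne fun h => (Finset.mem_erase.1 hj).1 (hx h).symm
            rw [← Finset.mul_prod_erase _ _ hj]
            field_simp
        _ = (q.eval (x i) - p.derivative.eval (x i)) * ∏ k ∈ univ.erase i, (x i - x k) := by
            rw [← mul_assoc, this]
    rw [hF]
    simp only [eval_add, eval_neg, eval_mul, derivative_mul, eval_add, eval_mul]
    rw [hP i, hQ i]
    nlinarith [hS]
  -- divisibility
  have hdvd : y ∣ F := by
    rw [hy]
    refine Fintype.prod_dvd_of_coprime (Polynomial.pairwise_coprime_X_sub_C hx) fun i => ?_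
    exact dvd_iff_isRoot.2 (hroot i)
  obtain ⟨g, hg⟩ := hdvd
  -- degree bound
  have hydder : y.derivative.natDegree ≤ n - 1 := by
    have := natDegree_derivative_le y
    omega
  have hFdeg : F.natDegree ≤ n := by
    have h1 : (p * y.derivative).natDegree ≤ n + 1 := by
      have := natDegree_mul_le (p := p) (q := y.derivative)
      omega
    have h2 : (p * y.derivative).derivative.natDegree ≤ n := by
      have := natDegree_derivative_le (p * y.derivative)
      omega
    have h3 : (q * y.derivative).natDegree ≤ n := by
      have := natDegree_mul_le (p := q) (q := y.derivative)
      omega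
    refine (natDegree_add_le _ _).trans ?_
    rw [natDegree_neg]
    exact max_le h2 h3
  -- g is constant
  rcases eq_or_ne g 0 with hg0 | hg0
  · exact ⟨0, by rw [hg, hg0, mul_zero, map_zero, zero_mul]⟩
  · have hdegg : g.natDegree = 0 := by
      have := natDegree_mul hymonic.ne_zero hg0
      rw [← hg] at this
      omega
    refine ⟨g.coeff 0, ?_⟩
    rw [hg, mul_comm]
    congr 1
    exact eq_C_of_natDegree_eq_zero hdegg
end

section
/- Let n ≥ 1 and let x_1, …, x_n be pairwise distinct real numbers satisfying ∑_{k≠i} 2/(x_i − x_k) = x_i for all 1 ≤ i ≤ n. Then ∏_{k=1}^n (x − x_k) = He_n(x), the n-th probabilist's Hermite polynomial. In particular, the zeros of He_n are the unique n-point configuration of distinct reals in this electrostatic equilibrium. -/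
open Polynomial Finset

lemma derivative_finprod {ι : Type*} [DecidableEq ι] (s : Finset ι) (f : ι → ℝ[X]) :
    derivative (∏ i ∈ s, f i) = ∑ i ∈ s, (∏ j ∈ s.erase i, f j) * derivative (f i) := by
  induction s using Finset.induction_on with
  | empty => simp
  | @insert a s ha ih =>
    rw [Finset.prod_insert ha, derivative_mul, ih, Finset.sum_insert ha,
      Finset.erase_insert ha, Finset.mul_sum, mul_comm (derivative (f a))]
    congr 1
    refine Finset.sum_congr rfl fun i hi => ?_
    rw [Finset.erase_insert_of_ne (by rintro rfl; exact ha hi),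
      Finset.prod_insert (fun h => ha (Finset.mem_of_mem_erase h)), mul_assoc]


lemma deriv_hermite (n : ℕ) :
    derivative (hermite (n+1)) = ((n : ℤ[X]) + 1) * hermite n := by
  induction n with
  | zero => simp [hermite_one]
  | succ m ih =>
    rw [hermite_succ (m+1), derivative_sub, derivative_mul, derivative_X, one_mul, ih,
        derivative_mul, hermite_succ m]
    simp only [derivative_add, derivative_natCast, derivative_one, add_zero, zero_add, zero_mul]
    push_cast
    ring

lemma hermite_ode (n : ℕ) (hn : 1 ≤ n) :
    derivative (derivative (hermite n)) - X * derivative (hermite n)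
      + (n : ℤ[X]) * hermite n = 0 := by
  obtain ⟨m, rfl⟩ : ∃ m, n = m + 1 := ⟨n - 1, by omega⟩
  rw [deriv_hermite m, derivative_mul, hermite_succ m]
  simp only [derivative_add, derivative_natCast, derivative_one, add_zero, zero_mul, zero_add]
  push_cast
  ring

theorem stmt_11 (n : ℕ) (hn : 1 ≤ n) (x : Fin n → ℝ) (hx : Function.Injective x)
    (heq : ∀ i : Fin n, ∑ k ∈ univ.erase i, 2 / (x i - x k) = x i) :
    ∏ k, (X - C (x k)) = (Polynomial.hermite n).map (Int.castRingHom ℝ) := by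
  classical
  set P : ℝ[X] := ∏ k, (X - C (x k)) with hP
  have hsub : ∀ i j : Fin n, i ≠ j → x i - x j ≠ 0 := fun i j h => sub_ne_zero.mpr (hx.ne h)
  have hPmonic : P.Monic := monic_prod_of_monic _ _ fun k _ => monic_X_sub_C _
  have hPdeg : P.natDegree = n := by
    rw [hP, natDegree_prod_of_monic _ _ fun k _ => monic_X_sub_C _]
    simp
  -- derivative formula
  have hD : derivative P = ∑ i, ∏ k ∈ univ.erase i, (X - C (x k)) := by
    rw [hP, derivative_finprod]
    simp
  -- eval of erased product
  have evalErased : ∀ (i m : Fin n), m ≠ i →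
      eval (x i) (∏ k ∈ univ.erase m, (X - C (x k))) = 0 := by
    intro i m him
    rw [eval_prod]
    exact prod_eq_zero (mem_erase.mpr ⟨him.symm, mem_univ i⟩) (by simp)
  have evalP' : ∀ i, eval (x i) (derivative P) = ∏ k ∈ univ.erase i, (x i - x k) := by
    intro i
    rw [hD, eval_finset_sum]
    rw [Finset.sum_eq_single i (fun m _ him => evalErased i m him) (by simp)]
    simp [eval_prod]
  have evalP'' : ∀ i, eval (x i) (derivative (derivative P)) =
      2 * ∑ j ∈ univ.erase i, ∏ k ∈ (univ.erase i).erase j, (x i - x k) := by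
    intro i
    rw [hD, derivative_sum]
    have hterm : ∀ m : Fin n,
        eval (x i) (derivative (∏ k ∈ univ.erase m, (X - C (x k)))) =
        if m = i then ∑ j ∈ univ.erase i, ∏ k ∈ (univ.erase i).erase j, (x i - x k)
        else ∏ k ∈ (univ.erase i).erase m, (x i - x k) := by
      intro m
      rw [derivative_finprod]
      simp only [derivative_sub, derivative_X, derivative_C, sub_zero, mul_one]
      rw [eval_finset_sum]
      by_cases hmi : m = i
      · subst hmi
        simp [eval_prod]
      · rw [if_neg hmi]
        rw [Finset.sum_eq_single_of_mem i (mem_erase.mpr ⟨fun h => hmi h.symm, mem_univ i⟩)]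
        · rw [eval_prod, Finset.erase_right_comm]
          simp
        · intro j hj hji
          rw [eval_prod]
          exact prod_eq_zero (mem_erase.mpr ⟨hji.symm,
            mem_erase.mpr ⟨fun h => hmi h.symm, mem_univ i⟩⟩) (by simp)
    rw [eval_finset_sum]
    simp only [hterm]
    rw [← Finset.sum_erase_add _ _ (mem_univ i), if_pos rfl,
      Finset.sum_congr rfl (fun m hm => if_neg (mem_erase.mp hm).1)]
    ring
  -- the equilibrium gives eval (x i) Q = 0 for Q := P'' - X P' + n P
  set Q : ℝ[X] := derivative (derivative P) - X * derivative P + (n : ℝ[X]) * P with hQdef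
  have evalQ : ∀ i, eval (x i) Q = 0 := by
    intro i
    have hPi : eval (x i) P = 0 := by
      rw [hP, eval_prod]
      exact prod_eq_zero (mem_univ i) (by simp)
    have key : x i * ∏ k ∈ univ.erase i, (x i - x k) =
        2 * ∑ j ∈ univ.erase i, ∏ k ∈ (univ.erase i).erase j, (x i - x k) := by
      calc x i * ∏ k ∈ univ.erase i, (x i - x k)
          = (∑ j ∈ univ.erase i, 2 / (x i - x j)) * ∏ k ∈ univ.erase i, (x i - x k) := by
            rw [heq i]
        _ = 2 * ∑ j ∈ univ.erase i, ∏ k ∈ (univ.erase i).erase j, (x i - x k) := by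
            rw [Finset.sum_mul, Finset.mul_sum]
            refine Finset.sum_congr rfl fun j hj => ?_
            rw [← Finset.mul_prod_erase _ _ hj, ← mul_assoc,
              div_mul_cancel₀ _ (hsub i j (mem_erase.mp hj).1.symm)]
    simp only [hQdef, eval_add, eval_sub, eval_mul, eval_X, eval_natCast, hPi, mul_zero,
      add_zero, evalP', evalP'' ]
    rw [← key]
    ring
  have hODE_P : derivative (derivative P) - X * derivative P + (n : ℝ[X]) * P = 0 := by
    rw [← hQdef]
    refine Polynomial.eq_zero_of_natDegree_lt_card_of_eval_eq_zero Q hx evalQ ?_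
    rw [Fintype.card_fin]
    rcases eq_or_ne Q 0 with h | h
    · rw [h, natDegree_zero]; omega
    · rw [Polynomial.natDegree_lt_iff_degree_lt h, Polynomial.degree_lt_iff_coeff_zero]
      intro m hm
      have hm' : n ≤ m := by exact_mod_cast hm
      obtain ⟨k, rfl⟩ : ∃ k, m = k + 1 := ⟨m - 1, by omega⟩
      have h2 : P.coeff (k + 1 + 2) = 0 := coeff_eq_zero_of_natDegree_lt (by omega)
      rw [hQdef, coeff_add, coeff_sub, coeff_derivative, coeff_derivative,
        show k + 1 + 1 + 1 = k + 1 + 2 from rfl, h2, coeff_X_mul, coeff_derivative,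
        ← Polynomial.C_eq_natCast, coeff_C_mul]
      rcases eq_or_lt_of_le hm' with he | hl
      · have hc1 : P.coeff (k + 1) = 1 := by
          have := hPmonic.coeff_natDegree
          rwa [hPdeg, he] at this
        subst he
        rw [hc1]
        push_cast
        ring
      · have hc1 : P.coeff (k + 1) = 0 := coeff_eq_zero_of_natDegree_lt (by omega)
        rw [hc1]
        ring
  set H : ℝ[X] := (hermite n).map (Int.castRingHom ℝ) with hH
  have hHmonic : H.Monic := (hermite_monic n).map _
  have hHdeg : H.natDegree = n := by
    rw [hH, (hermite_monic n).natDegree_map, natDegree_hermite]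
  have hODE_H : derivative (derivative H) - X * derivative H + (n : ℝ[X]) * H = 0 := by
    have h0 := congrArg (Polynomial.map (Int.castRingHom ℝ)) (hermite_ode n hn)
    simp only [Polynomial.map_add, Polynomial.map_sub, Polynomial.map_mul,
      Polynomial.map_natCast, Polynomial.map_X, Polynomial.map_zero,
      ← Polynomial.derivative_map] at h0
    exact h0
  have hODE_D : derivative (derivative (P - H)) - X * derivative (P - H)
      + (n : ℝ[X]) * (P - H) = 0 := by
    simp only [derivative_sub]
    linear_combination hODE_P - hODE_H
  have hdegD : (P - H).degree < (n : WithBot ℕ) := by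
    have hdp : P.degree = (n : WithBot ℕ) := by
      rw [Polynomial.degree_eq_natDegree hPmonic.ne_zero, hPdeg]
    have hdh : H.degree = (n : WithBot ℕ) := by
      rw [Polynomial.degree_eq_natDegree hHmonic.ne_zero, hHdeg]
    have := Polynomial.degree_sub_lt (hdp.trans hdh.symm) hPmonic.ne_zero
      (hPmonic.leadingCoeff.trans hHmonic.leadingCoeff.symm)
    rwa [hdp] at this
  have hD0 : P - H = 0 := by
    by_contra hne
    obtain ⟨d, hd⟩ : ∃ d, (P - H).natDegree = d := ⟨_, rfl⟩
    have hdn : d < n := by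
      rw [← hd]
      exact (Polynomial.natDegree_lt_iff_degree_lt hne).mpr hdegD
    have hlead : (P - H).coeff d ≠ 0 := by
      rw [← hd]
      exact fun h => hne (Polynomial.leadingCoeff_eq_zero.mp h)
    have h2 : (P - H).coeff (d + 2) = 0 := coeff_eq_zero_of_natDegree_lt (by omega)
    have hc := congrArg (fun p => coeff p d) hODE_D
    simp only [coeff_add, coeff_sub, coeff_zero] at hc
    rw [coeff_derivative, coeff_derivative, show d + 1 + 1 = d + 2 from rfl, h2, zero_mul,
      zero_mul, ← Polynomial.C_eq_natCast, coeff_C_mul] at hc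
    rcases Nat.eq_zero_or_pos d with h0 | hpos
    · subst h0
      rw [mul_coeff_zero, coeff_X_zero, zero_mul] at hc
      have : (n : ℝ) ≠ 0 := Nat.cast_ne_zero.mpr (by omega)
      have : (n : ℝ) * (P - H).coeff 0 ≠ 0 := mul_ne_zero this hlead
      simp only [zero_sub, neg_zero, zero_add] at hc
      exact this hc
    · obtain ⟨k, rfl⟩ : ∃ k, d = k + 1 := ⟨d - 1, by omega⟩
      rw [coeff_X_mul, coeff_derivative] at hc
      have hcoef : ((n : ℝ) - (k + 1)) * (P - H).coeff (k + 1) = 0 := by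
        linear_combination hc
      have h3 : (n : ℝ) - (k + 1) ≠ 0 := by
        have : (k : ℝ) + 1 < n := by exact_mod_cast hdn
        intro h
        nlinarith
      exact hlead (by
        rcases mul_eq_zero.mp hcoef with h | h
        · exact absurd h h3
        · exact h)
  exact sub_eq_zero.mp hD0
end
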